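/- (Finite-partition identification of the inverse probability weighting process.) In the interlaced-filtration setup, define for adapted processes H = (H_k)_{k=0}^K and Q = (Q_k)_{k=0}^K the estimating function Ξ_IPW(H, Q) = (Q₀ H₀ − E_{P'}[H₀]) + Σ_{j=1}^{K} (Q_j H_j − Q_{j−1} E_{P'}[H_j | 𝓗_{j−1}]), and let Q*_k = E_P[Z | 𝓖_k] be the inverse probability weighting process. Then: (i) for every bounded adapted process H, E_P[Ξ_IPW(H, Q*)] = 0; and (ii) conversely, if a bounded adapted process Q satisfies E_P[Ξ_IPW(H, Q)] = 0 for every bounded adapted process H, then Q_k = E_P[Z | 𝓖_k] almost surely for every k = 0, …, K. -/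

import Mathlib

/-!
With `Z = dP'/dP`, the process `Q*_k = E_P[Z | 𝓖_k]` is the density of `P'` on `𝓖_k`, so
`E_P[Q*_k h] = E_{P'}[h]` for bounded `𝓖_k`-measurable `h`. The shared transitions extend this to
bounded `𝓗_j`-measurable `g` at time `j`:
`E_P[Q*_j g] = E_P[Q*_j E_P[g | 𝓖_j]] = E_P[Q*_j E_{P'}[g | 𝓖_j]] = E_{P'}[g]`.
Taking `g = E_{P'}[H_{j+1} | 𝓗_j]` shows that every summand of `Ξ_IPW(H, Q*)` has `P`-mean zero.
Conversely, testing against the process equal to `h` at time `k` and `0` elsewhere gives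
`E_P[Q_k h] = E_P[Q_{k-1} E_{P'}[h | 𝓗_{k-1}]]`, which equals `E_{P'}[h]` once `Q_{k-1} = Q*_{k-1}`;
by induction on `k` this pins down `Q_k = E_P[Z | 𝓖_k]`.
-/

open MeasureTheory
open scoped ENNReal MeasureTheory

variable {Ω : Type*}

/-- A process `(H_k)` is adapted to the filtration `(𝓖_k)` if `H_k` is
`𝓖_k`-measurable for each `k`. -/
def IsAdapted (G : ℕ → MeasurableSpace Ω) (H : ℕ → Ω → ℝ) : Prop :=
  ∀ k, Measurable[G k] (H k)

/-- A process `(H_k)` is (uniformly) bounded. -/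
def IsBddProc (H : ℕ → Ω → ℝ) : Prop :=
  ∃ C : ℝ, ∀ k ω, |H k ω| ≤ C

/-- The finite-partition inverse probability weighting estimating function
`Ξ_IPW(H, Q) = (Q₀ H₀ − E_{P'}[H₀]) + Σ_{j=1}^{K} (Q_j H_j − Q_{j−1} E_{P'}[H_j | 𝓗_{j−1}])`. -/
noncomputable def XiIPW {mΩ : MeasurableSpace Ω} (P' : Measure Ω) (K : ℕ)
    (Hf : ℕ → MeasurableSpace Ω) (H Q : ℕ → Ω → ℝ) (ω : Ω) : ℝ :=
  (Q 0 ω * H 0 ω - ∫ ω', H 0 ω' ∂P')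
    + ∑ j ∈ Finset.range K,
        (Q (j + 1) ω * H (j + 1) ω - Q j ω * (P'[H (j + 1)|Hf j]) ω)

theorem integral_mul_condExp_of_stronglyMeasurable_left {m mΩ : MeasurableSpace Ω}
    {μ : Measure Ω} (hm : m ≤ mΩ) [SigmaFinite (μ.trim hm)] {f g : Ω → ℝ}
    (hf : StronglyMeasurable[m] f) (hfg : Integrable (fun ω => f ω * g ω) μ)
    (hg : Integrable g μ) :
    ∫ ω, f ω * μ[g|m] ω ∂μ = ∫ ω, f ω * g ω ∂μ :=
  calc ∫ ω, f ω * μ[g|m] ω ∂μ = ∫ ω, μ[f * g|m] ω ∂μ :=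
        integral_congr_ae (condExp_mul_of_stronglyMeasurable_left hf hfg hg).symm
    _ = ∫ ω, f ω * g ω ∂μ := integral_condExp hm

theorem exists_measurable_abs_le_ae_eq {m mΩ : MeasurableSpace Ω} {μ : Measure Ω}
    {f : Ω → ℝ} (hf : StronglyMeasurable[m] f) {R : ℝ} (hfR : ∀ᵐ ω ∂μ, |f ω| ≤ R) :
    ∃ g : Ω → ℝ, Measurable[m] g ∧ (∀ ω, |g ω| ≤ |R|) ∧ g =ᵐ[μ] f := by
  refine ⟨fun ω => max (-R) (min R (f ω)),
    measurable_const.max (measurable_const.min hf.measurable), fun ω => ?_, ?_⟩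
  · exact abs_le.mpr ⟨(neg_le_neg (le_abs_self R)).trans (le_max_left _ _),
      max_le (neg_le_abs R) ((min_le_left _ _).trans (le_abs_self R))⟩
  · filter_upwards [hfR] with ω hω
    obtain ⟨hlo, hhi⟩ := abs_le.mp hω
    simp only [min_eq_right hhi, max_eq_right hlo]

theorem Integrable.mul_condExp_of_absolutelyContinuous {mΩ : MeasurableSpace Ω}
    {P P' : Measure Ω} {n : MeasurableSpace Ω} {q h : Ω → ℝ} (hq : Integrable q P)
    (hPP' : P ≪ P') (hn : n ≤ mΩ) {R : ℝ} (hhR : ∀ᵐ ω ∂P', |h ω| ≤ R) :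
    Integrable (fun ω => q ω * P'[h|n] ω) P :=
  hq.mul_bdd (stronglyMeasurable_condExp.mono hn).aestronglyMeasurable
    (Filter.Eventually.mono (hPP'.ae_le (ae_bdd_abs_condExp_of_ae_bdd_abs hhR))
      fun _ hω => (Real.norm_eq_abs _).trans_le hω)

section RadonNikodym

variable {mΩ : MeasurableSpace Ω} {P P' : Measure Ω} [IsFiniteMeasure P] [IsFiniteMeasure P']
  {m n : MeasurableSpace Ω}

theorem integral_condExp_rnDeriv_mul (hP'P : P' ≪ P) (hm : m ≤ mΩ) {h : Ω → ℝ}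
    (hh : StronglyMeasurable[m] h) {R : ℝ} (hhR : ∀ᵐ ω ∂P, |h ω| ≤ R) :
    ∫ ω, P[fun ω' => (P'.rnDeriv P ω').toReal|m] ω * h ω ∂P = ∫ ω, h ω ∂P' := by
  have hZ : Integrable (fun ω => (P'.rnDeriv P ω).toReal) P := Measure.integrable_toReal_rnDeriv
  have hhZ : Integrable (fun ω => h ω * (P'.rnDeriv P ω).toReal) P :=
    hZ.bdd_mul (hh.mono hm).aestronglyMeasurable
      (hhR.mono fun ω hω => (Real.norm_eq_abs _).trans_le hω)
  calc ∫ ω, P[fun ω' => (P'.rnDeriv P ω').toReal|m] ω * h ω ∂P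
      = ∫ ω, h ω * P[fun ω' => (P'.rnDeriv P ω').toReal|m] ω ∂P := by simp_rw [mul_comm]
    _ = ∫ ω, h ω * (P'.rnDeriv P ω).toReal ∂P :=
        integral_mul_condExp_of_stronglyMeasurable_left hm hh hhZ hZ
    _ = ∫ ω, (P'.rnDeriv P ω).toReal * h ω ∂P := by simp_rw [mul_comm]
    _ = ∫ ω, h ω ∂P' := integral_toReal_rnDeriv_mul hP'P

theorem integral_condExp_rnDeriv_mul_of_condExp_eq (hP'P : P' ≪ P) (hm : m ≤ mΩ)
    (hn : n ≤ mΩ) (hshared : ∀ f : Ω → ℝ, Measurable[n] f → (∃ C, ∀ ω, |f ω| ≤ C) →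
      P[f|m] =ᵐ[P] P'[f|m])
    {g : Ω → ℝ} (hg : Measurable[n] g) {R : ℝ} (hgR : ∀ ω, |g ω| ≤ R) :
    ∫ ω, P[fun ω' => (P'.rnDeriv P ω').toReal|m] ω * g ω ∂P = ∫ ω, g ω ∂P' := by
  set Q := P[fun ω' => (P'.rnDeriv P ω').toReal|m]
  have hg_eq : P[g|m] =ᵐ[P] P'[g|m] := hshared g hg ⟨R, hgR⟩
  have hgm : AEStronglyMeasurable[mΩ] g P := (hg.mono hn le_rfl).aestronglyMeasurable
  have hg_norm : ∀ᵐ ω ∂P, ‖g ω‖ ≤ R := .of_forall fun ω => (Real.norm_eq_abs _).trans_le (hgR ω)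
  have hcond : ∀ᵐ ω ∂P, |P'[g|m] ω| ≤ R := by
    filter_upwards [hg_eq, ae_bdd_abs_condExp_of_ae_bdd_abs (m := m) (.of_forall hgR)]
      with ω hω hle
    rwa [← hω]
  calc ∫ ω, Q ω * g ω ∂P = ∫ ω, Q ω * P[g|m] ω ∂P :=
        (integral_mul_condExp_of_stronglyMeasurable_left hm stronglyMeasurable_condExp
          (integrable_condExp.mul_bdd hgm hg_norm) (.of_bound hgm R hg_norm)).symm
    _ = ∫ ω, Q ω * P'[g|m] ω ∂P := integral_congr_ae (Filter.EventuallyEq.rfl.mul hg_eq)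
    _ = ∫ ω, P'[g|m] ω ∂P' := integral_condExp_rnDeriv_mul hP'P hm stronglyMeasurable_condExp hcond
    _ = ∫ ω, g ω ∂P' := integral_condExp hm

theorem integral_condExp_rnDeriv_mul_condExp (hP'P : P' ≪ P) (hPP' : P ≪ P') (hm : m ≤ mΩ)
    (hn : n ≤ mΩ) (hshared : ∀ f : Ω → ℝ, Measurable[n] f → (∃ C, ∀ ω, |f ω| ≤ C) →
      P[f|m] =ᵐ[P] P'[f|m])
    {h : Ω → ℝ} {R : ℝ} (hhR : ∀ᵐ ω ∂P', |h ω| ≤ R) :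
    ∫ ω, P[fun ω' => (P'.rnDeriv P ω').toReal|m] ω * P'[h|n] ω ∂P = ∫ ω, h ω ∂P' := by
  -- `P'[h|n]` is only `P'`-a.e. bounded, while `hshared` asks for an everywhere bound.
  obtain ⟨g, hg, hgR, hg_eq⟩ := exists_measurable_abs_le_ae_eq (μ := P') stronglyMeasurable_condExp
    (ae_bdd_abs_condExp_of_ae_bdd_abs (m := n) hhR)
  calc ∫ ω, P[fun ω' => (P'.rnDeriv P ω').toReal|m] ω * P'[h|n] ω ∂P
      = ∫ ω, P[fun ω' => (P'.rnDeriv P ω').toReal|m] ω * g ω ∂P :=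
        integral_congr_ae (Filter.EventuallyEq.rfl.mul (hPP'.ae_eq hg_eq).symm)
    _ = ∫ ω, g ω ∂P' := integral_condExp_rnDeriv_mul_of_condExp_eq hP'P hm hn hshared hg hgR
    _ = ∫ ω, P'[h|n] ω ∂P' := integral_congr_ae hg_eq
    _ = ∫ ω, h ω ∂P' := integral_condExp hn

theorem ae_eq_condExp_rnDeriv_of_forall_integral_mul_eq (hP'P : P' ≪ P) (hm : m ≤ mΩ)
    {f : Ω → ℝ} (hf : StronglyMeasurable[m] f) (hfi : Integrable f P)
    (hf_eq : ∀ h : Ω → ℝ, Measurable[m] h → (∀ ω, |h ω| ≤ 1) →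
      ∫ ω, f ω * h ω ∂P = ∫ ω, h ω ∂P') :
    f =ᵐ[P] P[fun ω' => (P'.rnDeriv P ω').toReal|m] := by
  refine ae_eq_condExp_of_forall_setIntegral_eq hm Measure.integrable_toReal_rnDeriv
    (fun s _ _ => hfi.integrableOn) (fun s hs _ => ?_) hf.aestronglyMeasurable
  have hind := hf_eq (s.indicator 1) (measurable_const.indicator hs) fun ω => by
    by_cases hω : ω ∈ s <;> simp [hω]
  rw [Measure.setIntegral_toReal_rnDeriv hP'P, ← integral_indicator_one (hm s hs), ← hind,
    ← integral_indicator (hm s hs)]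
  congr 1 with ω
  by_cases hω : ω ∈ s <;> simp [hω]

end RadonNikodym

theorem isAdapted_single {G : ℕ → MeasurableSpace Ω} {k : ℕ} {h : Ω → ℝ}
    (hh : Measurable[G k] h) : IsAdapted G (Pi.single k h) := by
  intro i
  rcases eq_or_ne i k with rfl | hi
  · simpa using hh
  · rw [Pi.single_eq_of_ne hi]
    exact measurable_const

theorem isBddProc_single {k : ℕ} {h : Ω → ℝ} {C : ℝ} (hC : ∀ ω, |h ω| ≤ C) :
    IsBddProc (Pi.single k h) := by
  refine ⟨max C 0, fun i ω => ?_⟩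
  rcases eq_or_ne i k with rfl | hi
  · simpa using (hC ω).trans (le_max_left C 0)
  · simp [hi]

section XiIPW

variable {mΩ : MeasurableSpace Ω} (P' : Measure Ω) (K : ℕ) (Hf : ℕ → MeasurableSpace Ω)
  (Q : ℕ → Ω → ℝ) (h : Ω → ℝ) (ω : Ω)

theorem XiIPW_single_zero :
    XiIPW P' K Hf (Pi.single 0 h) Q ω = Q 0 ω * h ω - ∫ ω', h ω' ∂P' := by
  simp [XiIPW]

theorem XiIPW_single_succ {j : ℕ} (hj : j < K) :
    XiIPW P' K Hf (Pi.single (j + 1) h) Q ω = Q (j + 1) ω * h ω - Q j ω * P'[h|Hf j] ω := by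
  rw [XiIPW, Finset.sum_eq_single j]
  · simp
  · intro i _ hij
    simp [hij]
  · simp [hj]

end XiIPW

theorem integral_XiIPW {mΩ : MeasurableSpace Ω} {P P' : Measure Ω} [IsProbabilityMeasure P]
    (K : ℕ) (Hf : ℕ → MeasurableSpace Ω) {H Q : ℕ → Ω → ℝ}
    (hQH : ∀ k, Integrable (fun ω => Q k ω * H k ω) P)
    (hQcond : ∀ j, Integrable (fun ω => Q j ω * P'[H (j + 1)|Hf j] ω) P) :
    ∫ ω, XiIPW P' K Hf H Q ω ∂P = (∫ ω, Q 0 ω * H 0 ω ∂P - ∫ ω, H 0 ω ∂P')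
      + ∑ j ∈ Finset.range K,
          (∫ ω, Q (j + 1) ω * H (j + 1) ω ∂P - ∫ ω, Q j ω * P'[H (j + 1)|Hf j] ω ∂P) := by
  have hterm : ∀ j ∈ Finset.range K, Integrable
      (fun ω => Q (j + 1) ω * H (j + 1) ω - Q j ω * P'[H (j + 1)|Hf j] ω) P :=
    fun j _ => (hQH (j + 1)).sub (hQcond j)
  have hfirst : Integrable (fun ω => Q 0 ω * H 0 ω - ∫ ω', H 0 ω' ∂P') P :=
    (hQH 0).sub (integrable_const _)
  simp only [XiIPW]
  rw [integral_add hfirst (integrable_finsetSum _ hterm), integral_sub (hQH 0) (integrable_const _),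
    integral_const, probReal_univ, one_smul, integral_finsetSum _ hterm]
  refine congrArg _ (Finset.sum_congr rfl fun j _ => integral_sub (hQH (j + 1)) (hQcond j))

section Identification

variable {mΩ : MeasurableSpace Ω} {P P' : Measure Ω} [IsProbabilityMeasure P]
  [IsProbabilityMeasure P'] {K : ℕ} {G Hf : ℕ → MeasurableSpace Ω}

theorem integral_XiIPW_condExp_rnDeriv_eq_zero (hP'P : P' ≪ P) (hPP' : P ≪ P')
    (hG : ∀ k, G k ≤ mΩ) (hHm : ∀ k, Hf k ≤ mΩ)
    (hshared : ∀ j < K, ∀ f : Ω → ℝ, Measurable[Hf j] f → (∃ C, ∀ ω, |f ω| ≤ C) →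
      P[f|G j] =ᵐ[P] P'[f|G j])
    {H : ℕ → Ω → ℝ} (hH : IsAdapted G H) (hHb : IsBddProc H) :
    ∫ ω, XiIPW P' K Hf H (fun k => P[fun ω' => (P'.rnDeriv P ω').toReal|G k]) ω ∂P = 0 := by
  obtain ⟨C, hC⟩ := hHb
  have hHC : ∀ k, ∀ᵐ ω ∂P, ‖H k ω‖ ≤ C :=
    fun k => .of_forall fun ω => (Real.norm_eq_abs _).trans_le (hC k ω)
  have hH_pair : ∀ k, ∫ ω, P[fun ω' => (P'.rnDeriv P ω').toReal|G k] ω * H k ω ∂P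
      = ∫ ω, H k ω ∂P' :=
    fun k => integral_condExp_rnDeriv_mul hP'P (hG k) (hH k).stronglyMeasurable
      (.of_forall (hC k))
  have hcond_pair : ∀ j < K, ∫ ω, P[fun ω' => (P'.rnDeriv P ω').toReal|G j] ω
      * P'[H (j + 1)|Hf j] ω ∂P = ∫ ω, H (j + 1) ω ∂P' :=
    fun j hj => integral_condExp_rnDeriv_mul_condExp hP'P hPP' (hG j) (hHm j) (hshared j hj)
      (.of_forall (hC (j + 1)))
  rw [integral_XiIPW K Hf
      (fun k => integrable_condExp.mul_bdd ((hH k).mono (hG k) le_rfl).aestronglyMeasurable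
        (hHC k))
      (fun j => Integrable.mul_condExp_of_absolutelyContinuous integrable_condExp hPP' (hHm j)
        (.of_forall (hC (j + 1)))),
    hH_pair, sub_self, zero_add]
  exact Finset.sum_eq_zero fun j hj => by
    rw [hH_pair, hcond_pair j (Finset.mem_range.mp hj), sub_self]

theorem ae_eq_condExp_rnDeriv_of_forall_integral_XiIPW_eq_zero (hP'P : P' ≪ P) (hPP' : P ≪ P')
    (hG : ∀ k, G k ≤ mΩ) (hHm : ∀ k, Hf k ≤ mΩ)
    (hshared : ∀ j < K, ∀ f : Ω → ℝ, Measurable[Hf j] f → (∃ C, ∀ ω, |f ω| ≤ C) →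
      P[f|G j] =ᵐ[P] P'[f|G j])
    {Q : ℕ → Ω → ℝ} (hQ : IsAdapted G Q) (hQb : IsBddProc Q)
    (hQnull : ∀ H : ℕ → Ω → ℝ, IsAdapted G H → IsBddProc H →
      ∫ ω, XiIPW P' K Hf H Q ω ∂P = 0) :
    ∀ k ≤ K, Q k =ᵐ[P] P[fun ω' => (P'.rnDeriv P ω').toReal|G k] := by
  obtain ⟨D, hD⟩ := hQb
  have hQi : ∀ k, Integrable (Q k) P := fun k =>
    .of_bound ((hQ k).mono (hG k) le_rfl).aestronglyMeasurable D
      (.of_forall fun ω => (Real.norm_eq_abs _).trans_le (hD k ω))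
  have hQh : ∀ k {h : Ω → ℝ}, Measurable[G k] h → (∀ ω, |h ω| ≤ 1) →
      Integrable (fun ω => Q k ω * h ω) P := fun k h hh hh1 =>
    (hQi k).mul_bdd ((hh.mono (hG k) le_rfl).aestronglyMeasurable)
      (.of_forall fun ω => (Real.norm_eq_abs _).trans_le (hh1 ω))
  have hspike : ∀ k {h : Ω → ℝ}, Measurable[G k] h → (∀ ω, |h ω| ≤ 1) →
      ∫ ω, XiIPW P' K Hf (Pi.single k h) Q ω ∂P = 0 :=
    fun k h hh hh1 => hQnull _ (isAdapted_single hh) (isBddProc_single hh1)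
  intro k hk
  induction k with
  | zero =>
    refine ae_eq_condExp_rnDeriv_of_forall_integral_mul_eq hP'P (hG 0) (hQ 0).stronglyMeasurable
      (hQi 0) fun h hh hh1 => ?_
    have h0 := hspike 0 hh hh1
    simp_rw [XiIPW_single_zero] at h0
    rwa [integral_sub (hQh 0 hh hh1) (integrable_const _), integral_const, probReal_univ,
      one_smul, sub_eq_zero] at h0
  | succ j ih =>
    have hj : j < K := hk
    refine ae_eq_condExp_rnDeriv_of_forall_integral_mul_eq hP'P (hG (j + 1))
      (hQ (j + 1)).stronglyMeasurable (hQi (j + 1)) fun h hh hh1 => ?_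
    have h0 := hspike (j + 1) hh hh1
    simp_rw [XiIPW_single_succ P' K Hf Q h _ hj] at h0
    rw [integral_sub (hQh (j + 1) hh hh1) (Integrable.mul_condExp_of_absolutelyContinuous
      (hQi j) hPP' (hHm j) (.of_forall hh1)), sub_eq_zero] at h0
    rw [h0]
    exact (integral_congr_ae ((ih hj.le).mul .rfl)).trans
      (integral_condExp_rnDeriv_mul_condExp hP'P hPP' (hG j) (hHm j) (hshared j hj)
        (.of_forall hh1))

end Identification

theorem ipw_process_identification_general {mΩ : MeasurableSpace Ω}
    (P P' : Measure Ω) [IsProbabilityMeasure P] [IsProbabilityMeasure P']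
    (hP'P : P' ≪ P) (hPP' : P ≪ P')
    (K : ℕ) (G Hf : ℕ → MeasurableSpace Ω)
    (hG : ∀ k, G k ≤ mΩ) (hHm : ∀ k, Hf k ≤ mΩ)
    (hshared : ∀ j < K, ∀ f : Ω → ℝ, Measurable[Hf j] f → (∃ C, ∀ ω, |f ω| ≤ C) →
      P[f|G j] =ᵐ[P] P'[f|G j]) :
    (∀ H : ℕ → Ω → ℝ, IsAdapted G H → IsBddProc H →
      ∫ ω, XiIPW P' K Hf H
        (fun k => P[fun ω' => (P'.rnDeriv P ω').toReal|G k]) ω ∂P = 0) ∧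
    (∀ Q : ℕ → Ω → ℝ, IsAdapted G Q → IsBddProc Q →
      (∀ H : ℕ → Ω → ℝ, IsAdapted G H → IsBddProc H →
        ∫ ω, XiIPW P' K Hf H Q ω ∂P = 0) →
      ∀ k ≤ K, Q k =ᵐ[P] P[fun ω' => (P'.rnDeriv P ω').toReal|G k]) :=
  ⟨fun _ hH hHb => integral_XiIPW_condExp_rnDeriv_eq_zero hP'P hPP' hG hHm hshared hH hHb,
    fun _ hQ hQb hQnull =>
      ae_eq_condExp_rnDeriv_of_forall_integral_XiIPW_eq_zero hP'P hPP' hG hHm hshared hQ hQb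
        hQnull⟩

/-- Finite-partition identification of the inverse probability weighting
process. In the interlaced-filtration setup (`𝓖₀ ⊆ 𝓗₀ ⊆ 𝓖₁ ⊆ ⋯ ⊆ 𝓗_{K−1} ⊆ 𝓖_K`,
`P` and `P'` equivalent, sharing the covariate transitions
`E_P[·|𝓖_j] = E_{P'}[·|𝓖_j]` on bounded `𝓗_j`-measurable functions), the IPW
process `Q*_k = E_P[dP'/dP | 𝓖_k]` makes `E_P[Ξ_IPW(H, Q*)] = 0` for every
bounded adapted `H`; conversely, any bounded adapted `Q` annihilating
`Ξ_IPW(H, Q)` in `P`-mean against all bounded adapted `H` equals `Q*` almost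
surely. -/
theorem ipw_process_identification {mΩ : MeasurableSpace Ω}
    (P P' : Measure Ω) [IsProbabilityMeasure P] [IsProbabilityMeasure P']
    (hP'P : P' ≪ P) (hPP' : P ≪ P')
    (K : ℕ) (G Hf : ℕ → MeasurableSpace Ω)
    (hGH : ∀ k, G k ≤ Hf k) (hHG : ∀ k, Hf k ≤ G (k + 1))
    (hG : ∀ k, G k ≤ mΩ) (hHm : ∀ k, Hf k ≤ mΩ)
    (hshared : ∀ j < K, ∀ f : Ω → ℝ, Measurable[Hf j] f → (∃ C, ∀ ω, |f ω| ≤ C) →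
      P[f|G j] =ᵐ[P] P'[f|G j]) :
    (∀ H : ℕ → Ω → ℝ, IsAdapted G H → IsBddProc H →
      ∫ ω, XiIPW P' K Hf H
        (fun k => P[fun ω' => (P'.rnDeriv P ω').toReal|G k]) ω ∂P = 0) ∧
    (∀ Q : ℕ → Ω → ℝ, IsAdapted G Q → IsBddProc Q →
      (∀ H : ℕ → Ω → ℝ, IsAdapted G H → IsBddProc H →
        ∫ ω, XiIPW P' K Hf H Q ω ∂P = 0) →
      ∀ k ≤ K, Q k =ᵐ[P] P[fun ω' => (P'.rnDeriv P ω').toReal|G k]) :=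
  ipw_process_identification_general P P' hP'P hPP' K G Hf hG hHm hshared
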